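/- Explicit Berry-connection matrix in the 2D real avoided-crossing model: let δ > 0, u(x,y) := x, v(x,y) := √(y² + δ²), E(x,y) := √(x² + y² + δ²), and let Θ(x,y) be the matrix Θ(u,v) of the diagonalizing frame with these u, v. Then for all (x,y) ∈ ℝ² and (p,q) ∈ ℝ²: the matrix (p·∂ₓΘ + q·∂ᵧΘ)·Θᵀ has zero diagonal entries (b⁺ = b⁻ = 0) and its (1,2) entry equals bⁱ(x,y,p,q) = ( q·x·y/√(y²+δ²) − p·√(y²+δ²) ) / (2(x² + y² + δ²)), while its (2,1) entry equals −bⁱ. -/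

import Mathlib

/-!
With `w = x / E ∈ (-1, 1)` the cosine of the mixing angle `φ` (its sine is `v / E = √(1 - w²)`),
the frame `Θ` is the rotation by `φ / 2`, with entries `cos (φ / 2) = √((1 + w) / 2)` and
`sin (φ / 2) = √((1 - w) / 2)`. For a rotation `R(ψ)` one has `(dR) Rᵀ = dψ • [[0, 1], [-1, 0]]`,
and here `dψ = d(arccos w) / 2 = -dw / (2√(1 - w²))`. This kills the diagonal, and the
off-diagonal entry follows from `∂ₓw = v² / E³` and `∂ᵧw = -x y / E³`.
-/

open Matrix

/-- The diagonalizing frame for the 2D real avoided-crossing model `u(x,y) = x`,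
`v(x,y) = √(y² + δ²)`, with `E(x,y) = √(x² + y² + δ²)`: since `v > 0` is real,
`Θ(x,y) = (2(1 + x/E))^{-1/2} · [[1 + x/E, v/E],[−v/E, 1 + x/E]]` (a real matrix). -/
noncomputable def Theta2Dreal (δ x y : ℝ) : Matrix (Fin 2) (Fin 2) ℝ :=
  let E : ℝ := Real.sqrt (x ^ 2 + y ^ 2 + δ ^ 2)
  let v : ℝ := Real.sqrt (y ^ 2 + δ ^ 2)
  (Real.sqrt (2 * (1 + x / E)))⁻¹ •
    !![1 + x / E, v / E; -(v / E), 1 + x / E]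

noncomputable def halfAngleFrame (w : ℝ) : Matrix (Fin 2) (Fin 2) ℝ :=
  !![√((1 + w) / 2), √((1 - w) / 2); -√((1 - w) / 2), √((1 + w) / 2)]

noncomputable def halfAngleFrameDeriv (w : ℝ) : Matrix (Fin 2) (Fin 2) ℝ :=
  !![(4 * √((1 + w) / 2))⁻¹, -(4 * √((1 - w) / 2))⁻¹;
    (4 * √((1 - w) / 2))⁻¹, (4 * √((1 + w) / 2))⁻¹]

lemma hasDerivAt_sqrt_one_add_mul_div_two {c w : ℝ} (hw : 0 < 1 + c * w) :
    HasDerivAt (fun s => √((1 + c * s) / 2)) (c * (4 * √((1 + c * w) / 2))⁻¹) w := by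
  have hlin : HasDerivAt (fun s => (1 + c * s) / 2) (c / 2) w := by
    simpa using ((hasDerivAt_id w).const_mul c |>.const_add 1).div_const 2
  convert hlin.sqrt (half_pos hw).ne' using 1
  ring

lemma hasDerivAt_halfAngleFrame_apply {w : ℝ} (hw : w ∈ Set.Ioo (-1) 1) (k l : Fin 2) :
    HasDerivAt (fun s => halfAngleFrame s k l) (halfAngleFrameDeriv w k l) w := by
  obtain ⟨hlo, hhi⟩ := hw
  have hplus := hasDerivAt_sqrt_one_add_mul_div_two (c := 1) (w := w) (by linarith)
  have hminus := hasDerivAt_sqrt_one_add_mul_div_two (c := -1) (w := w) (by linarith)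
  simp only [one_mul, neg_one_mul, ← sub_eq_add_neg] at hplus hminus
  fin_cases k <;> fin_cases l <;>
    simp only [halfAngleFrame, halfAngleFrameDeriv, Matrix.of_apply, Matrix.cons_val',
      Matrix.cons_val_zero, Matrix.cons_val_one, Matrix.empty_val', Matrix.cons_val_fin_one,
      Fin.zero_eta, Fin.mk_one]
  · exact hplus
  · exact hminus
  · exact (neg_neg (4 * √((1 - w) / 2))⁻¹) ▸ hminus.neg
  · exact hplus

lemma HasDerivAt.halfAngleFrame_apply {g : ℝ → ℝ} {g' t : ℝ} (hg : HasDerivAt g g' t)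
    (hw : g t ∈ Set.Ioo (-1) 1) (k l : Fin 2) :
    HasDerivAt (fun s => halfAngleFrame (g s) k l) (g' * halfAngleFrameDeriv (g t) k l) t := by
  rw [mul_comm]
  exact (hasDerivAt_halfAngleFrame_apply hw k l).comp t hg

lemma halfAngleFrameDeriv_mul_transpose {w : ℝ} (hw : w ∈ Set.Ioo (-1) 1) :
    halfAngleFrameDeriv w * (halfAngleFrame w)ᵀ = (2 * √(1 - w ^ 2))⁻¹ • !![0, -1; 1, 0] := by
  obtain ⟨hlo, hhi⟩ := hw
  have ha : 0 < √((1 + w) / 2) := Real.sqrt_pos.2 (by linarith)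
  have hb : 0 < √((1 - w) / 2) := Real.sqrt_pos.2 (by linarith)
  have ha2 : √((1 + w) / 2) ^ 2 = (1 + w) / 2 := Real.sq_sqrt (by linarith)
  have hb2 : √((1 - w) / 2) ^ 2 = (1 - w) / 2 := Real.sq_sqrt (by linarith)
  have hab : 2 * (√((1 + w) / 2) * √((1 - w) / 2)) = √(1 - w ^ 2) := by
    rw [← Real.sqrt_mul (by linarith), ← Real.sqrt_sq zero_le_two, ← Real.sqrt_mul (by norm_num)]
    ring_nf
  rw [← hab, halfAngleFrame, halfAngleFrameDeriv]
  generalize √((1 + w) / 2) = a at *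
  generalize √((1 - w) / 2) = b at *
  ext k l
  fin_cases k <;> fin_cases l <;>
    simp only [Matrix.mul_apply, Fin.sum_univ_two, transpose_apply, of_apply, cons_val',
      cons_val_zero, cons_val_one, cons_val_fin_one, Fin.zero_eta, Fin.mk_one, Fin.isValue,
      Matrix.smul_apply, smul_eq_mul, mul_neg, neg_mul, mul_zero, mul_one]
  all_goals field_simp
  all_goals linarith

lemma sqrt_inv_mul_one_add {w : ℝ} (hw : -1 < w) :
    (√(2 * (1 + w)))⁻¹ * (1 + w) = √((1 + w) / 2) := by
  have hpos : 0 < 1 + w := by linarith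
  rw [show (1 + w) / 2 = (1 + w) ^ 2 / (2 * (1 + w)) by field_simp,
    Real.sqrt_div' _ (by positivity), Real.sqrt_sq hpos.le, inv_mul_eq_div]

lemma sqrt_inv_mul_sqrt_one_sub_sq {w : ℝ} (hw : -1 < w) :
    (√(2 * (1 + w)))⁻¹ * √(1 - w ^ 2) = √((1 - w) / 2) := by
  have hpos : 0 < 1 + w := by linarith
  rw [show (1 - w) / 2 = (1 - w ^ 2) / (2 * (1 + w)) by field_simp; ring,
    Real.sqrt_div' _ (by positivity), inv_mul_eq_div]

lemma inv_sqrt_smul_eq_halfAngleFrame {w : ℝ} (hw : -1 < w) :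
    (√(2 * (1 + w)))⁻¹ • !![1 + w, √(1 - w ^ 2); -√(1 - w ^ 2), 1 + w] = halfAngleFrame w := by
  rw [halfAngleFrame, ← sqrt_inv_mul_one_add hw, ← sqrt_inv_mul_sqrt_one_sub_sq hw]
  ext k l
  fin_cases k <;> fin_cases l <;> simp

noncomputable def avoidedCrossingCos (δ x y : ℝ) : ℝ :=
  x / √(x ^ 2 + y ^ 2 + δ ^ 2)

section avoidedCrossingCos

variable {δ : ℝ} (x y : ℝ)

lemma avoidedCrossingCos_mem_Ioo (hδ : δ ≠ 0) : avoidedCrossingCos δ x y ∈ Set.Ioo (-1) 1 := by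
  have hE : 0 < √(x ^ 2 + y ^ 2 + δ ^ 2) := Real.sqrt_pos.2 (by positivity)
  have hx : |x| < √(x ^ 2 + y ^ 2 + δ ^ 2) := by
    rw [← Real.sqrt_sq_eq_abs]
    have : 0 < δ ^ 2 := by positivity
    exact Real.sqrt_lt_sqrt (sq_nonneg x) (by nlinarith [sq_nonneg y])
  rw [abs_lt] at hx
  constructor
  · rw [avoidedCrossingCos, lt_div_iff₀ hE]; linarith
  · rw [avoidedCrossingCos, div_lt_one hE]; linarith

lemma sqrt_one_sub_avoidedCrossingCos_sq (hδ : δ ≠ 0) :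
    √(1 - avoidedCrossingCos δ x y ^ 2) = √(y ^ 2 + δ ^ 2) / √(x ^ 2 + y ^ 2 + δ ^ 2) := by
  have hE : x ^ 2 + y ^ 2 + δ ^ 2 ≠ 0 := by positivity
  rw [avoidedCrossingCos, div_pow, Real.sq_sqrt (by positivity), ← Real.sqrt_div' _ (by positivity)]
  congr 1
  field_simp
  ring

lemma theta2Dreal_eq_halfAngleFrame (hδ : δ ≠ 0) :
    Theta2Dreal δ x y = halfAngleFrame (avoidedCrossingCos δ x y) := by
  rw [← inv_sqrt_smul_eq_halfAngleFrame (avoidedCrossingCos_mem_Ioo x y hδ).1,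
    sqrt_one_sub_avoidedCrossingCos_sq x y hδ]
  rfl

lemma hasDerivAt_avoidedCrossingCos_fst (hδ : δ ≠ 0) :
    HasDerivAt (fun s => avoidedCrossingCos δ s y)
      ((y ^ 2 + δ ^ 2) / √(x ^ 2 + y ^ 2 + δ ^ 2) ^ 3) x := by
  have hE : x ^ 2 + y ^ 2 + δ ^ 2 ≠ 0 := by positivity
  have hsq : HasDerivAt (fun s => s ^ 2 + y ^ 2 + δ ^ 2) (2 * x) x := by
    simpa using ((hasDerivAt_pow 2 x).add_const (y ^ 2)).add_const (δ ^ 2)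
  refine ((hasDerivAt_id' x).fun_div (hsq.sqrt hE)
    (Real.sqrt_ne_zero'.2 (by positivity))).congr_deriv ?_
  have h2 := Real.sq_sqrt (by positivity : 0 ≤ x ^ 2 + y ^ 2 + δ ^ 2)
  field_simp
  linear_combination h2

lemma hasDerivAt_avoidedCrossingCos_snd (hδ : δ ≠ 0) :
    HasDerivAt (fun t => avoidedCrossingCos δ x t)
      (-(x * y) / √(x ^ 2 + y ^ 2 + δ ^ 2) ^ 3) y := by
  have hE : x ^ 2 + y ^ 2 + δ ^ 2 ≠ 0 := by positivity
  have hsq : HasDerivAt (fun t => x ^ 2 + t ^ 2 + δ ^ 2) (2 * y) y := by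
    simpa using ((hasDerivAt_pow 2 y).const_add (x ^ 2)).add_const (δ ^ 2)
  refine ((hasDerivAt_const y x).fun_div (hsq.sqrt hE)
    (Real.sqrt_ne_zero'.2 (by positivity))).congr_deriv ?_
  field_simp
  ring

end avoidedCrossingCos

/-- Explicit Berry-connection matrix in the 2D real avoided-crossing
model: for `δ > 0`, all `(x,y) ∈ ℝ²` and `(p,q) ∈ ℝ²`, the matrix
`(p·∂ₓΘ + q·∂ᵧΘ)·Θᵀ` has zero diagonal (`b⁺ = b⁻ = 0`), its `(1,2)` entry equals
`bⁱ = (q·x·y/√(y²+δ²) − p·√(y²+δ²)) / (2(x²+y²+δ²))`, and its `(2,1)` entry equals `−bⁱ`. -/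
theorem berry_connection_2d_real (δ : ℝ) (hδ : 0 < δ) (x y p q : ℝ) :
    (Matrix.of fun k l =>
        p * deriv (fun s => Theta2Dreal δ s y k l) x +
        q * deriv (fun s => Theta2Dreal δ x s k l) y) * (Theta2Dreal δ x y)ᵀ =
      !![0, (q * x * y / Real.sqrt (y ^ 2 + δ ^ 2) - p * Real.sqrt (y ^ 2 + δ ^ 2)) /
              (2 * (x ^ 2 + y ^ 2 + δ ^ 2));
         -((q * x * y / Real.sqrt (y ^ 2 + δ ^ 2) - p * Real.sqrt (y ^ 2 + δ ^ 2)) /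
              (2 * (x ^ 2 + y ^ 2 + δ ^ 2))), 0] := by
  have hΘ := fun x y => theta2Dreal_eq_halfAngleFrame x y hδ.ne'
  have hw := avoidedCrossingCos_mem_Ioo x y hδ.ne'
  have hD : (Matrix.of fun k l =>
        p * deriv (fun s => Theta2Dreal δ s y k l) x +
        q * deriv (fun s => Theta2Dreal δ x s k l) y) =
      (p * ((y ^ 2 + δ ^ 2) / √(x ^ 2 + y ^ 2 + δ ^ 2) ^ 3) +
        q * (-(x * y) / √(x ^ 2 + y ^ 2 + δ ^ 2) ^ 3)) •
        halfAngleFrameDeriv (avoidedCrossingCos δ x y) := by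
    ext k l
    simp only [hΘ, Matrix.of_apply, Matrix.smul_apply, smul_eq_mul,
      ((hasDerivAt_avoidedCrossingCos_fst x y hδ.ne').halfAngleFrame_apply hw k l).deriv,
      ((hasDerivAt_avoidedCrossingCos_snd x y hδ.ne').halfAngleFrame_apply hw k l).deriv]
    ring
  rw [hD, hΘ, smul_mul_assoc, halfAngleFrameDeriv_mul_transpose hw, smul_smul,
    sqrt_one_sub_avoidedCrossingCos_sq x y hδ.ne']
  have hv2 := Real.sq_sqrt (by positivity : 0 ≤ y ^ 2 + δ ^ 2)
  have hE2 := Real.sq_sqrt (by positivity : 0 ≤ x ^ 2 + y ^ 2 + δ ^ 2)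
  ext k l
  fin_cases k <;> fin_cases l <;>
    simp only [Matrix.smul_apply, of_apply, cons_val', cons_val_zero, cons_val_one,
      cons_val_fin_one, Fin.zero_eta, Fin.mk_one, Fin.isValue, smul_eq_mul, mul_zero]
  all_goals field_simp; rw [hE2, hv2]; ring
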